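/- Let 0<α<1, l>0, T>0, integers N≥2 and M≥1, h = l/N, a time mesh 0 = t₀ < t₁ < ⋯ < t_M ≤ T with τ_k = t_k − t_{k−1}, L1 weights d_{k,j} = ((t_k−t_{j−1})^{1−α} − (t_k−t_j)^{1−α})/(t_j−t_{j−1}), and p^k ≥ 0. Suppose real numbers e_i^k (0≤i≤N, 0≤k≤M) satisfy e_i^0 = 0, e_0^k = e_N^k = 0, and for all 1≤i≤N−1, 1≤k≤M: (1/Γ(2−α)) Σ_{j=1}^{k} d_{k,j}(e_i^j − e_i^{j−1}) − (e_{i+1}^k − 2e_i^k + e_{i−1}^k)/h² + p^k e_i^k = ξ_i^k, where the residuals satisfy max_i |ξ_i^k| ≤ ε for all k. Then for every 0≤k≤M: max_{0≤i≤N} |e_i^k| ≤ T^α Γ(1−α) · ε. -/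

import Mathlib

/-!
At each time level the error attains its maximum modulus at some interior node (it vanishes on
the boundary). There, multiplied by the sign of the error, the discrete Laplacian term and the
reaction term are nonnegative. Summation by parts turns the L1 sum into `d_{k,k} e^k` plus a
history sum whose coefficients `d_{k,j} - d_{k,j+1}` are nonpositive, because the weights
`d_{k,j}` are slopes of the concave function `s ↦ s^{1-α}` and so increase with `j`. By induction
over `k` the history is bounded by `C = T^α Γ(1-α) ε`, which leaves
`d_{k,k} |e^k| + (d_{k,1} - d_{k,k}) C ≤ Γ(2-α) ε`. The constant is chosen so that
`Γ(2-α) ε ≤ d_{k,1} C`, which follows from `d_{k,1} ≥ (1-α) t_k^{-α} ≥ (1-α) T^{-α}`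
(tangent-line bound for `s^{1-α}`), and hence `|e^k| ≤ C`.
-/

open Finset

lemma sum_Icc_mul_sub_eq {R : Type*} [CommRing R] (w x : ℕ → R) {k : ℕ} (hk : 1 ≤ k) :
    ∑ j ∈ Icc 1 k, w j * (x j - x (j - 1)) =
      w k * x k - w 1 * x 0 + ∑ j ∈ Icc 1 (k - 1), (w j - w (j + 1)) * x j := by
  induction k, hk using Nat.le_induction with
  | base =>
    simp only [Icc_self, sum_singleton, tsub_self, Icc_eq_empty_of_lt, Nat.lt_one_iff, sum_empty]
    ring
  | succ k hk ih =>
    obtain ⟨m, rfl⟩ := Nat.exists_eq_add_of_le' hk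
    rw [sum_Icc_succ_top (by omega), ih, Nat.add_sub_cancel, Nat.add_sub_cancel,
      sum_Icc_succ_top (by omega)]
    ring

lemma mul_le_abs_of_abs_le_one {σ : ℝ} (hσ : |σ| ≤ 1) (x : ℝ) : σ * x ≤ |x| :=
  (le_abs_self _).trans (by rw [abs_mul]; exact mul_le_of_le_one_left (abs_nonneg x) hσ)

lemma exists_abs_le_one_mul_eq_abs (x : ℝ) : ∃ σ : ℝ, |σ| ≤ 1 ∧ σ * x = |x| := by
  rcases abs_choice x with hx | hx
  · exact ⟨1, by simp, by simp [hx]⟩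
  · exact ⟨-1, by simp, by simp [hx]⟩

lemma add_le_mul_sum_Icc_mul_sub {w x : ℕ → ℝ} {k : ℕ} {C σ : ℝ} (hk : 1 ≤ k)
    (hw : ∀ j, 1 ≤ j → j < k → w j ≤ w (j + 1)) (hx0 : x 0 = 0)
    (hx : ∀ j, 1 ≤ j → j < k → |x j| ≤ C) (hσ : |σ| ≤ 1) :
    w k * (σ * x k) + (w 1 - w k) * C ≤ σ * ∑ j ∈ Icc 1 k, w j * (x j - x (j - 1)) := by
  have htelescope : w 1 - w k = ∑ j ∈ Icc 1 (k - 1), (w j - w (j + 1)) := by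
    have := sum_Icc_mul_sub_eq w (fun _ => (1 : ℝ)) hk
    simp only [sub_self, mul_zero, sum_const_zero, mul_one] at this
    linarith
  have hhistory : (w 1 - w k) * C ≤ ∑ j ∈ Icc 1 (k - 1), (w j - w (j + 1)) * (σ * x j) := by
    rw [htelescope, sum_mul]
    refine sum_le_sum fun j hj => ?_
    obtain ⟨hj1, hjk⟩ := mem_Icc.1 hj
    exact mul_le_mul_of_nonpos_left ((mul_le_abs_of_abs_le_one hσ _).trans (hx j hj1 (by omega)))
      (sub_nonpos.2 (hw j hj1 (by omega)))
  have hswap : σ * ∑ j ∈ Icc 1 (k - 1), (w j - w (j + 1)) * x j =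
      ∑ j ∈ Icc 1 (k - 1), (w j - w (j + 1)) * (σ * x j) := by
    rw [mul_sum]; exact sum_congr rfl fun _ _ => by ring
  rw [sum_Icc_mul_sub_eq w x hk, hx0, mul_zero, sub_zero, mul_add, hswap]
  linarith

lemma one_sub_mul_sub_le_rpow_sub_rpow_mul_rpow {α a b : ℝ} (hα0 : 0 ≤ α) (hα1 : α ≤ 1)
    (ha : 0 ≤ a) (hb : 0 ≤ b) :
    (1 - α) * (b - a) ≤ (b ^ (1 - α) - a ^ (1 - α)) * b ^ α := by
  have amgm : a ^ (1 - α) * b ^ α ≤ (1 - α) * a + α * b :=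
    Real.geom_mean_le_arith_mean2_weighted (sub_nonneg.2 hα1) hα0 ha hb (sub_add_cancel 1 α)
  have hb1 : b ^ (1 - α) * b ^ α = b := by
    rw [← Real.rpow_add' hb (by norm_num), sub_add_cancel, Real.rpow_one]
  rw [sub_mul (b ^ (1 - α)), hb1]
  linarith

/-- The weight `d_{k,j}` of the L1 approximation of the Caputo derivative on the mesh `t`. -/
noncomputable def l1Weight (α : ℝ) (t : ℕ → ℝ) (k j : ℕ) : ℝ :=
  ((t k - t (j - 1)) ^ (1 - α) - (t k - t j) ^ (1 - α)) / (t j - t (j - 1))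

section l1Weight

variable {α T : ℝ} {t : ℕ → ℝ} {k j : ℕ}

lemma l1Weight_le_succ (hα0 : 0 ≤ α) (hα1 : α ≤ 1) (ht : StrictMonoOn t (Set.Iic k))
    (hj : 1 ≤ j) (hjk : j < k) : l1Weight α t k j ≤ l1Weight α t k (j + 1) := by
  have hmem : ∀ i ≤ k, t k - t i ∈ Set.Ici (0 : ℝ) := fun i hi =>
    sub_nonneg.2 (ht.monotoneOn hi (Set.mem_Iic.2 le_rfl) hi)
  have hprev : t (j - 1) < t j :=
    ht (Set.mem_Iic.2 (by omega)) (Set.mem_Iic.2 (by omega)) (by omega)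
  have hnext : t j < t (j + 1) := ht (Set.mem_Iic.2 (by omega)) (Set.mem_Iic.2 hjk) (by omega)
  have hslope := (Real.concaveOn_rpow (sub_nonneg.2 hα1) (by linarith)).slope_anti_adjacent
    (hmem (j + 1) hjk) (hmem (j - 1) (by omega))
    (by linarith : t k - t (j + 1) < t k - t j) (by linarith : t k - t j < t k - t (j - 1))
  simpa only [l1Weight, sub_sub_sub_cancel_left, Nat.add_sub_cancel] using hslope

lemma l1Weight_self_pos (hα : α < 1) (ht : t (k - 1) < t k) : 0 < l1Weight α t k k := by
  have hτ : 0 < t k - t (k - 1) := sub_pos.2 ht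
  rw [l1Weight, sub_self, Real.zero_rpow (sub_pos.2 hα).ne', sub_zero]
  exact div_pos (Real.rpow_pos_of_pos hτ _) hτ

lemma one_sub_le_l1Weight_one_mul_rpow (hα0 : 0 ≤ α) (hα1 : α ≤ 1) (ht0 : t 0 = 0)
    (ht1 : 0 < t 1) (ht1k : t 1 ≤ t k) (htkT : t k ≤ T) :
    1 - α ≤ l1Weight α t k 1 * T ^ α := by
  have htk : 0 < t k := ht1.trans_le ht1k
  have hd : l1Weight α t k 1 * t 1 = t k ^ (1 - α) - (t k - t 1) ^ (1 - α) := by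
    rw [l1Weight, Nat.sub_self, ht0, sub_zero, sub_zero, div_mul_cancel₀ _ ht1.ne']
  have htangent := one_sub_mul_sub_le_rpow_sub_rpow_mul_rpow hα0 hα1 (sub_nonneg.2 ht1k) htk.le
  rw [sub_sub_cancel, ← hd] at htangent
  have hdk : 1 - α ≤ l1Weight α t k 1 * t k ^ α :=
    le_of_mul_le_mul_right (by linarith) ht1
  have hd0 : 0 ≤ l1Weight α t k 1 :=
    (mul_nonneg_iff_of_pos_right (Real.rpow_pos_of_pos htk α)).1 ((sub_nonneg.2 hα1).trans hdk)
  exact hdk.trans (mul_le_mul_of_nonneg_left (Real.rpow_le_rpow htk.le htkT hα0) hd0)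

lemma Gamma_two_sub_le_l1Weight_one_mul (hα0 : 0 ≤ α) (hα1 : α < 1) (ht0 : t 0 = 0)
    (ht1 : 0 < t 1) (ht1k : t 1 ≤ t k) (htkT : t k ≤ T) :
    Real.Gamma (2 - α) ≤ l1Weight α t k 1 * (T ^ α * Real.Gamma (1 - α)) := by
  rw [show 2 - α = (1 - α) + 1 by ring, Real.Gamma_add_one (sub_pos.2 hα1).ne', ← mul_assoc]
  exact mul_le_mul_of_nonneg_right (one_sub_le_l1Weight_one_mul_rpow hα0 hα1.le ht0 ht1 ht1k htkT)
    (Real.Gamma_pos_of_pos (sub_pos.2 hα1)).le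

end l1Weight

lemma abs_le_of_L1_node {w x : ℕ → ℝ} {k : ℕ} {g h p u v r ε K : ℝ} (hk : 1 ≤ k)
    (hg : 0 < g)
    (hw : ∀ j, 1 ≤ j → j < k → w j ≤ w (j + 1)) (hwk : 0 < w k) (hK : g ≤ w 1 * K)
    (hε : 0 ≤ ε) (hx0 : x 0 = 0) (hx : ∀ j, 1 ≤ j → j < k → |x j| ≤ K * ε)
    (hu : |u| ≤ |x k|) (hv : |v| ≤ |x k|) (hp : 0 ≤ p) (hr : |r| ≤ ε)
    (heq : 1 / g * ∑ j ∈ Icc 1 k, w j * (x j - x (j - 1)) - (u - 2 * x k + v) / h ^ 2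
      + p * x k = r) :
    |x k| ≤ K * ε := by
  obtain ⟨σ, hσ, hσx⟩ := exists_abs_le_one_mul_eq_abs (x k)
  have hdiffusion : 0 ≤ σ * ((2 * x k - u - v) / h ^ 2) := by
    rw [← mul_div_assoc]
    refine div_nonneg ?_ (sq_nonneg h)
    linarith [mul_le_abs_of_abs_le_one hσ u, mul_le_abs_of_abs_le_one hσ v]
  have hreaction : 0 ≤ p * (σ * x k) := hσx ▸ mul_nonneg hp (abs_nonneg _)
  have hsum : σ * ∑ j ∈ Icc 1 k, w j * (x j - x (j - 1)) ≤ g * ε := by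
    have hsigned : σ * r = g⁻¹ * (σ * ∑ j ∈ Icc 1 k, w j * (x j - x (j - 1)))
        + σ * ((2 * x k - u - v) / h ^ 2) + p * (σ * x k) := by
      rw [← heq]; ring
    rw [← inv_mul_le_iff₀ hg]
    linarith [mul_le_abs_of_abs_le_one hσ r]
  have hhistory := add_le_mul_sum_Icc_mul_sub hk hw hx0 hx hσ
  rw [hσx] at hhistory
  have hsource : g * ε ≤ w 1 * (K * ε) := by
    rw [← mul_assoc]; exact mul_le_mul_of_nonneg_right hK hε
  exact le_of_mul_le_mul_left (by linarith) hwk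

lemma forall_abs_le_of_abs_le_at_interior_max {v : ℕ → ℝ} {N : ℕ} {C : ℝ} (hC : 0 ≤ C)
    (h0 : v 0 = 0) (hN : v N = 0)
    (hmax : ∀ i, 1 ≤ i → i ≤ N - 1 → (∀ j ≤ N, |v j| ≤ |v i|) → |v i| ≤ C) :
    ∀ i ≤ N, |v i| ≤ C := by
  obtain ⟨i₀, hi₀, hi₀max⟩ :=
    exists_max_image (range (N + 1)) (fun i => |v i|) nonempty_range_add_one
  have hle : ∀ j ≤ N, |v j| ≤ |v i₀| := fun j hj => hi₀max j (mem_range.2 (by omega))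
  intro i hi
  refine (hle i hi).trans ?_
  rw [mem_range] at hi₀
  rcases Nat.eq_zero_or_pos i₀ with rfl | hpos
  · simpa [h0] using hC
  rcases eq_or_lt_of_le (Nat.lt_succ_iff.1 hi₀) with rfl | hlt
  · simpa [hN] using hC
  exact hmax i₀ hpos (by omega) hle

theorem L1_scheme_error_propagation_general (α T : ℝ) (hα0 : 0 < α) (hα1 : α < 1)
    (hT : 0 < T) (N M : ℕ) (hM : 1 ≤ M)
    (h : ℝ)
    (t : ℕ → ℝ) (ht0 : t 0 = 0) (htmono : ∀ k, k < M → t k < t (k + 1))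
    (htT : t M ≤ T)
    (d : ℕ → ℕ → ℝ)
    (hd : ∀ k j : ℕ, 1 ≤ j → j ≤ k → k ≤ M →
      d k j = ((t k - t (j - 1)) ^ (1 - α) - (t k - t j) ^ (1 - α)) /
        (t j - t (j - 1)))
    (p : ℕ → ℝ) (hp : ∀ k ≤ M, 0 ≤ p k)
    (e ξ : ℕ → ℕ → ℝ) (ε : ℝ)
    (hIC : ∀ i ≤ N, e i 0 = 0)
    (hBC : ∀ k ≤ M, e 0 k = 0 ∧ e N k = 0)
    (hscheme : ∀ i, 1 ≤ i → i ≤ N - 1 → ∀ k, 1 ≤ k → k ≤ M →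
      (1 / Real.Gamma (2 - α)) *
          (∑ j ∈ Finset.Icc 1 k, d k j * (e i j - e i (j - 1)))
        - (e (i + 1) k - 2 * e i k + e (i - 1) k) / h ^ 2
        + p k * e i k = ξ i k)
    (hξ : ∀ k, 1 ≤ k → k ≤ M → ∀ i ≤ N, |ξ i k| ≤ ε) :
    ∀ k ≤ M, ∀ i ≤ N, |e i k| ≤ T ^ α * Real.Gamma (1 - α) * ε := by
  have hε : 0 ≤ ε := (abs_nonneg _).trans (hξ 1 le_rfl hM 0 (Nat.zero_le N))
  have hC : 0 ≤ T ^ α * Real.Gamma (1 - α) * ε := by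
    have := Real.Gamma_pos_of_pos (sub_pos.2 hα1)
    have := Real.rpow_pos_of_pos hT α
    positivity
  have ht : StrictMonoOn t (Set.Iic M) := strictMonoOn_Iic_of_lt_succ fun m hm => by
    simpa using htmono m hm
  have ht1 : 0 < t 1 := ht0 ▸ ht (Set.mem_Iic.2 (Nat.zero_le M)) (Set.mem_Iic.2 hM) one_pos
  intro k
  induction k using Nat.strong_induction_on with
  | _ k ih =>
  intro hk
  rcases Nat.eq_zero_or_pos k with rfl | hk1
  · intro i hi; simpa [hIC i hi] using hC
  have htk : StrictMonoOn t (Set.Iic k) := ht.mono (Set.Iic_subset_Iic.2 hk)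
  refine forall_abs_le_of_abs_le_at_interior_max hC (hBC k hk).1 (hBC k hk).2
    fun i hi1 hiN hmax => abs_le_of_L1_node (w := d k) (x := e i) hk1
      (Real.Gamma_pos_of_pos (by linarith)) (fun j hj1 hjk => ?_) ?_ ?_ hε (hIC i (by omega))
      (fun j _ hjk => ih j hjk (by omega) i (by omega)) (hmax _ (by omega)) (hmax _ (by omega))
      (hp k hk) (hξ k hk1 hk i (by omega)) (hscheme i hi1 hiN k hk1 hk)
  · rw [hd k j hj1 hjk.le hk, hd k (j + 1) (by omega) hjk hk]
    exact l1Weight_le_succ hα0.le hα1.le htk hj1 hjk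
  · rw [hd k k hk1 le_rfl hk]
    exact l1Weight_self_pos hα1 (htk (Set.mem_Iic.2 (by omega)) (Set.mem_Iic.2 le_rfl) (by omega))
  · rw [hd k 1 le_rfl hk1 hk]
    exact Gamma_two_sub_le_l1Weight_one_mul hα0.le hα1 ht0 ht1
      (ht.monotoneOn (Set.mem_Iic.2 hM) (Set.mem_Iic.2 hk) hk1)
      ((ht.monotoneOn (Set.mem_Iic.2 hk) (Set.mem_Iic.2 le_rfl) hk).trans htT)

/-- Error-propagation estimate for the fully implicit L1 finite-difference
scheme: if the errors `e_i^k` satisfy the scheme with residuals `ξ_i^k` as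
source, zero initial and boundary data, and `max_i |ξ_i^k| ≤ ε`, then
`max_i |e_i^k| ≤ T^α Γ(1−α) ε` for all `k`. -/
theorem L1_scheme_error_propagation (α l T : ℝ) (hα0 : 0 < α) (hα1 : α < 1)
    (hl : 0 < l) (hT : 0 < T) (N M : ℕ) (hN : 2 ≤ N) (hM : 1 ≤ M)
    (h : ℝ) (hh : h = l / N)
    (t : ℕ → ℝ) (ht0 : t 0 = 0) (htmono : ∀ k, k < M → t k < t (k + 1))
    (htT : t M ≤ T)
    (d : ℕ → ℕ → ℝ)
    (hd : ∀ k j : ℕ, 1 ≤ j → j ≤ k → k ≤ M →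
      d k j = ((t k - t (j - 1)) ^ (1 - α) - (t k - t j) ^ (1 - α)) /
        (t j - t (j - 1)))
    (p : ℕ → ℝ) (hp : ∀ k ≤ M, 0 ≤ p k)
    (e ξ : ℕ → ℕ → ℝ) (ε : ℝ)
    (hIC : ∀ i ≤ N, e i 0 = 0)
    (hBC : ∀ k ≤ M, e 0 k = 0 ∧ e N k = 0)
    (hscheme : ∀ i, 1 ≤ i → i ≤ N - 1 → ∀ k, 1 ≤ k → k ≤ M →
      (1 / Real.Gamma (2 - α)) *
          (∑ j ∈ Finset.Icc 1 k, d k j * (e i j - e i (j - 1)))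
        - (e (i + 1) k - 2 * e i k + e (i - 1) k) / h ^ 2
        + p k * e i k = ξ i k)
    (hξ : ∀ k, 1 ≤ k → k ≤ M → ∀ i ≤ N, |ξ i k| ≤ ε) :
    ∀ k ≤ M, ∀ i ≤ N, |e i k| ≤ T ^ α * Real.Gamma (1 - α) * ε :=
  L1_scheme_error_propagation_general α T hα0 hα1 hT N M hM h t ht0 htmono htT d hd p hp e ξ ε hIC
    hBC hscheme hξ
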